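/- Let ρ be a two-qubit Schmidt-correlated state with coefficients c1, c2, c4, and let U1, U2 be 2×2 unitary matrices such that ρ' := (U1⊗U2) ρ (U1⊗U2)† is again of Schmidt-correlated form (i.e., all entries of ρ' vanish except possibly those in rows/columns indexed by |00⟩ and |11⟩). Then (c1 − c4)·(U1)_{11}·conj((U1)_{21}) = 0 and (c1 − c4)·(U2)_{11}·conj((U2)_{21}) = 0, where (U)_{jk} denotes the (j,k) entry. -/

import Mathlib

open Matrix Kronecker

/-!
Tracing out the second qubit turns `(U1 ⊗ U2) ρ (U1 ⊗ U2)ᴴ` into `U1 · diag(c1, c4) · U1ᴴ`,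
because `U2` is unitary and the reduced state of `ρ` is `diag(c1, c4)`. By unitarity of `U1`,
the off-diagonal entry of the latter is `(c1 - c4) (U1)₁₁ conj((U1)₂₁)`. On the other hand it is
`ρ'(00, 10) + ρ'(01, 11)`, and both entries vanish when `ρ'` has Schmidt-correlated form.
Symmetrically for `U2`, tracing out the first qubit.
-/

/-- The two-qubit Schmidt-correlated state
`ρ = c1|00⟩⟨00| + c2|00⟩⟨11| + conj(c2)|11⟩⟨00| + c4|11⟩⟨11|`. -/
noncomputable def scState (c1 c4 : ℝ) (c2 : ℂ) :
    Matrix (Fin 2 × Fin 2) (Fin 2 × Fin 2) ℂ :=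
  Matrix.of fun p q =>
    if p = (0, 0) ∧ q = (0, 0) then (c1 : ℂ)
    else if p = (0, 0) ∧ q = (1, 1) then c2
    else if p = (1, 1) ∧ q = (0, 0) then (starRingEnd ℂ) c2
    else if p = (1, 1) ∧ q = (1, 1) then (c4 : ℂ)
    else 0

/-- A 4×4 matrix is of Schmidt-correlated form if its only possibly nonzero entries
are in the rows/columns indexed by `|00⟩` and `|11⟩`. -/
def IsSCform (M : Matrix (Fin 2 × Fin 2) (Fin 2 × Fin 2) ℂ) : Prop :=
  ∀ p q, M p q ≠ 0 → (p = (0, 0) ∨ p = (1, 1)) ∧ (q = (0, 0) ∨ q = (1, 1))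

namespace Matrix

variable {R l m n p : Type*} [Fintype m] [Fintype n] [Fintype p]

def partialTraceRight [AddCommMonoid R] (M : Matrix (l × n) (m × n) R) : Matrix l m R :=
  of fun i j => ∑ k, M (i, k) (j, k)

def partialTraceLeft [AddCommMonoid R] (M : Matrix (n × l) (n × m) R) : Matrix l m R :=
  of fun i j => ∑ k, M (k, i) (k, j)

theorem partialTraceRight_kronecker_mul_mul_kronecker [CommSemiring R] [DecidableEq n]
    (A : Matrix l m R) (B : Matrix p n R) (C : Matrix m l R) (D : Matrix n p R)
    (M : Matrix (m × n) (m × n) R) (h : D * B = 1) :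
    partialTraceRight ((A ⊗ₖ B) * M * (C ⊗ₖ D)) = A * partialTraceRight M * C := by
  ext i j
  have hk : ∀ a b c d, ∑ k, A i a * B k b * M (a, b) (c, d) * (C c j * D d k) =
      if d = b then A i a * M (a, b) (c, d) * C c j else 0 := fun a b c d => by
    rw [← mul_boole, ← one_apply, ← h, mul_apply, Finset.mul_sum]
    exact Finset.sum_congr rfl fun _ _ => by ring
  simp only [partialTraceRight, of_apply, mul_apply, kroneckerMap_apply, Fintype.sum_prod_type,
    Finset.sum_mul, Finset.mul_sum, Finset.sum_comm (γ := p), hk, Finset.sum_ite_eq,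
    Finset.mem_univ, if_true]
  exact Finset.sum_congr rfl fun _ _ => Finset.sum_comm

theorem partialTraceLeft_kronecker_mul_mul_kronecker [CommSemiring R] [DecidableEq n]
    (A : Matrix p n R) (B : Matrix l m R) (C : Matrix n p R) (D : Matrix m l R)
    (M : Matrix (n × m) (n × m) R) (h : C * A = 1) :
    partialTraceLeft ((A ⊗ₖ B) * M * (C ⊗ₖ D)) = B * partialTraceLeft M * D := by
  ext i j
  have hk : ∀ a b c d, ∑ k, A k a * B i b * M (a, b) (c, d) * (C c k * D d j) =
      if c = a then B i b * M (a, b) (c, d) * D d j else 0 := fun a b c d => by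
    rw [← mul_boole, ← one_apply, ← h, mul_apply, Finset.mul_sum]
    exact Finset.sum_congr rfl fun _ _ => by ring
  simp only [partialTraceLeft, of_apply, mul_apply, kroneckerMap_apply,
    Fintype.sum_prod_type_right, Finset.sum_mul, Finset.mul_sum, Finset.sum_comm (γ := p), hk,
    Finset.sum_ite_eq, Finset.mem_univ, if_true]
  exact Finset.sum_congr rfl fun _ _ => Finset.sum_comm

theorem mul_diagonal_mul_conjTranspose_apply_zero_one [CommRing R] [StarRing R]
    {U : Matrix (Fin 2) (Fin 2) R} (hU : U ∈ unitaryGroup (Fin 2) R) (d : Fin 2 → R) :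
    (U * diagonal d * Uᴴ) 0 1 = (d 0 - d 1) * U 0 0 * star (U 1 0) := by
  have horth : U 0 0 * star (U 1 0) + U 0 1 * star (U 1 1) = 0 := by
    simpa [mul_apply, Fin.sum_univ_two] using congrFun (congrFun (mem_unitaryGroup_iff.mp hU) 0) 1
  simp only [mul_apply, Fin.sum_univ_two, diagonal_apply_eq, diagonal_apply_ne _ zero_ne_one,
    diagonal_apply_ne _ one_ne_zero, conjTranspose_apply, mul_zero, add_zero, zero_add]
  linear_combination d 1 * horth

end Matrix

theorem partialTraceRight_scState (c1 c4 : ℝ) (c2 : ℂ) :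
    partialTraceRight (scState c1 c4 c2) = diagonal ![(c1 : ℂ), c4] := by
  ext i j
  fin_cases i <;> fin_cases j <;> simp [scState, partialTraceRight, Fin.sum_univ_two]

theorem partialTraceLeft_scState (c1 c4 : ℝ) (c2 : ℂ) :
    partialTraceLeft (scState c1 c4 c2) = diagonal ![(c1 : ℂ), c4] := by
  ext i j
  fin_cases i <;> fin_cases j <;> simp [scState, partialTraceLeft, Fin.sum_univ_two]

theorem IsSCform.apply_eq_zero {M : Matrix (Fin 2 × Fin 2) (Fin 2 × Fin 2) ℂ} (hM : IsSCform M)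
    {p q : Fin 2 × Fin 2} (hpq : ¬((p = (0, 0) ∨ p = (1, 1)) ∧ (q = (0, 0) ∨ q = (1, 1)))) :
    M p q = 0 :=
  by_contra fun hne => hpq (hM p q hne)

theorem IsSCform.partialTraceRight_apply_zero_one {M : Matrix (Fin 2 × Fin 2) (Fin 2 × Fin 2) ℂ}
    (hM : IsSCform M) : partialTraceRight M 0 1 = 0 := by
  simp [partialTraceRight, Fin.sum_univ_two, hM.apply_eq_zero (p := (0, 0)) (q := (1, 0)),
    hM.apply_eq_zero (p := (0, 1)) (q := (1, 1))]

theorem IsSCform.partialTraceLeft_apply_zero_one {M : Matrix (Fin 2 × Fin 2) (Fin 2 × Fin 2) ℂ}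
    (hM : IsSCform M) : partialTraceLeft M 0 1 = 0 := by
  simp [partialTraceLeft, Fin.sum_univ_two, hM.apply_eq_zero (p := (0, 0)) (q := (0, 1)),
    hM.apply_eq_zero (p := (1, 0)) (q := (1, 1))]

theorem sc_form_constraint (c1 c4 : ℝ) (c2 : ℂ)
    (U1 U2 : Matrix (Fin 2) (Fin 2) ℂ)
    (hU1 : U1 ∈ Matrix.unitaryGroup (Fin 2) ℂ) (hU2 : U2 ∈ Matrix.unitaryGroup (Fin 2) ℂ)
    (hform : IsSCform ((U1 ⊗ₖ U2) * scState c1 c4 c2 * (U1 ⊗ₖ U2)ᴴ)) :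
    ((c1 : ℂ) - (c4 : ℂ)) * U1 0 0 * (starRingEnd ℂ) (U1 1 0) = 0 ∧
    ((c1 : ℂ) - (c4 : ℂ)) * U2 0 0 * (starRingEnd ℂ) (U2 1 0) = 0 := by
  have hU1' : U1ᴴ * U1 = 1 := mem_unitaryGroup_iff'.mp hU1
  have hU2' : U2ᴴ * U2 = 1 := mem_unitaryGroup_iff'.mp hU2
  rw [conjTranspose_kronecker] at hform
  constructor
  · calc ((c1 : ℂ) - c4) * U1 0 0 * (starRingEnd ℂ) (U1 1 0)
        = (U1 * diagonal ![(c1 : ℂ), c4] * U1ᴴ) 0 1 :=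
          (mul_diagonal_mul_conjTranspose_apply_zero_one hU1 ![(c1 : ℂ), c4]).symm
      _ = partialTraceRight ((U1 ⊗ₖ U2) * scState c1 c4 c2 * (U1ᴴ ⊗ₖ U2ᴴ)) 0 1 := by
          rw [partialTraceRight_kronecker_mul_mul_kronecker _ _ _ _ _ hU2',
            partialTraceRight_scState]
      _ = 0 := hform.partialTraceRight_apply_zero_one
  · calc ((c1 : ℂ) - c4) * U2 0 0 * (starRingEnd ℂ) (U2 1 0)
        = (U2 * diagonal ![(c1 : ℂ), c4] * U2ᴴ) 0 1 :=
          (mul_diagonal_mul_conjTranspose_apply_zero_one hU2 ![(c1 : ℂ), c4]).symm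
      _ = partialTraceLeft ((U1 ⊗ₖ U2) * scState c1 c4 c2 * (U1ᴴ ⊗ₖ U2ᴴ)) 0 1 := by
          rw [partialTraceLeft_kronecker_mul_mul_kronecker _ _ _ _ _ hU1',
            partialTraceLeft_scState]
      _ = 0 := hform.partialTraceLeft_apply_zero_one
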